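/- Let f be a union-intersection expression, h a function, H = f(h(S_1),...,h(S_m)), and define S'_i = {x ∈ S_i : h(x) ∈ H}. Then f(S'_1,...,S'_m) = f(S_1,...,S_m). -/

import Mathlib

/-- A union-intersection expression tree on `m` input sets: leaves are input
sets, internal nodes are binary union or intersection operations. -/
inductive Expr (m : ℕ) where
  | leaf : Fin m → Expr m
  | union : Expr m → Expr m → Expr m
  | inter : Expr m → Expr m → Expr m

/-- Bottom-up evaluation of an expression on sets `S : Fin m → Set U`. -/
def Expr.eval {m : ℕ} {U : Type*} (S : Fin m → Set U) : Expr m → Set U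
  | .leaf i => S i
  | .union a b => a.eval S ∪ b.eval S
  | .inter a b => a.eval S ∩ b.eval S

/-! Filtering `Sᵢ` by `h x ∈ H` is intersecting it with `h ⁻¹' H`, and intersecting every input
with a fixed set commutes with evaluation by distributivity. So the filtered value is
`f(S₁,…,Sₘ) ∩ h ⁻¹' H`, and this is all of `f(S₁,…,Sₘ)` because
`h '' f(S₁,…,Sₘ) ⊆ f(h '' S₁,…,h '' Sₘ) = H`. -/

namespace Expr

variable {m : ℕ} {U : Type*}

theorem eval_inter_right (S : Fin m → Set U) (T : Set U) (e : Expr m) :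
    e.eval (fun i => S i ∩ T) = e.eval S ∩ T := by
  induction e with
  | leaf i => rfl
  | union a b ha hb => rw [eval, eval, ha, hb, Set.union_inter_distrib_right]
  | inter a b ha hb =>
    rw [eval, eval, ha, hb]
    exact (Set.inter_inter_distrib_right _ _ _).symm

theorem image_eval_subset {V : Type*} (h : U → V) (S : Fin m → Set U) (e : Expr m) :
    h '' e.eval S ⊆ e.eval (fun j => h '' S j) := by
  induction e with
  | leaf i => exact subset_rfl
  | union a b ha hb => exact (Set.image_union h _ _).trans_subset (Set.union_subset_union ha hb)
  | inter a b ha hb => exact (Set.image_inter_subset h _ _).trans (Set.inter_subset_inter ha hb)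

end Expr

/-- Filtering each input set to the elements whose hash value lies in
`H = f(h(S₁),…,h(Sₘ))` does not change the value of the expression. -/
theorem eval_filter_eq_eval {m : ℕ} {U V : Type*} (e : Expr m) (h : U → V)
    (S : Fin m → Set U) :
    e.eval (fun i => {x ∈ S i | h x ∈ e.eval (fun j => h '' S j)}) = e.eval S := by
  change e.eval (fun i => S i ∩ h ⁻¹' e.eval (fun j => h '' S j)) = e.eval S
  rw [Expr.eval_inter_right, Set.inter_eq_left]
  exact Set.image_subset_iff.mp (Expr.image_eval_subset h S e)
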